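/- If a 3-qubit state a has q(a) ≠ 0 (FTS rank 4), then a is SLOCC-equivalent to the GHZ-class representative |111⟩ + |001⟩ + |010⟩ + k|100⟩ with k = −q(a)/8, i.e. to the state b with b₁₁₁ = b₀₀₁ = b₀₁₀ = 1, b₁₀₀ = −q(a)/8, and all other components zero. -/

import Mathlib

/-- A 3-qubit state: a map `Fin 2 → Fin 2 → Fin 2 → ℂ` with components `a i j k`. -/
abbrev QState3 : Type := Fin 2 → Fin 2 → Fin 2 → ℂ

/-- The action of the SLOCC-equivalence group `SL(2,ℂ)×SL(2,ℂ)×SL(2,ℂ)` on 3-qubit states: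
`((g₁,g₂,g₃)·a)_{ijk} = Σ (g₁)_{ii'} (g₂)_{jj'} (g₃)_{kk'} a_{i'j'k'}`. -/
noncomputable def sloccAct (g₁ g₂ g₃ : Matrix.SpecialLinearGroup (Fin 2) ℂ) (a : QState3) : QState3 :=
  fun i j k => ∑ i' : Fin 2, ∑ j' : Fin 2, ∑ k' : Fin 2,
    (g₁ : Matrix (Fin 2) (Fin 2) ℂ) i i' * (g₂ : Matrix (Fin 2) (Fin 2) ℂ) j j' *
      (g₃ : Matrix (Fin 2) (Fin 2) ℂ) k k' * a i' j' k'

/-- The quartic norm `q` of a 3-qubit state (Cayley's hyperdeterminant up to scale). -/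
def quarticQ3 (a : QState3) : ℂ :=
  -2 * (a 1 1 1 * a 0 0 0 -
      (a 0 0 1 * a 1 1 0 + a 0 1 0 * a 1 0 1 + a 1 0 0 * a 0 1 1)) ^ 2 -
    8 * (a 1 1 1 * a 0 0 1 * a 0 1 0 * a 1 0 0 + a 0 0 0 * a 1 1 0 * a 1 0 1 * a 0 1 1 -
      (a 0 1 0 * a 1 0 0 * a 1 0 1 * a 0 1 1 + a 0 0 1 * a 1 0 0 * a 1 1 0 * a 0 1 1 +
        a 0 0 1 * a 0 1 0 * a 1 1 0 * a 1 0 1))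

/-- The symplectic (antisymmetric bilinear) form of two 3-qubit states. -/
def symplQ3 (a b : QState3) : ℂ :=
  a 1 1 1 * b 0 0 0 - a 0 0 0 * b 1 1 1 +
    (a 0 0 1 * b 1 1 0 + a 0 1 0 * b 1 0 1 + a 1 0 0 * b 0 1 1) -
    (a 1 1 0 * b 0 0 1 + a 1 0 1 * b 0 1 0 + a 0 1 1 * b 1 0 0)

/- ### Auxiliary machinery -/

def act1 (m : Matrix (Fin 2) (Fin 2) ℂ) (a : QState3) : QState3 :=
  fun i j k => m i 0 * a 0 j k + m i 1 * a 1 j k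
def act2 (m : Matrix (Fin 2) (Fin 2) ℂ) (a : QState3) : QState3 :=
  fun i j k => m j 0 * a i 0 k + m j 1 * a i 1 k
def act3 (m : Matrix (Fin 2) (Fin 2) ℂ) (a : QState3) : QState3 :=
  fun i j k => m k 0 * a i j 0 + m k 1 * a i j 1

noncomputable def actAll (m₁ m₂ m₃ : Matrix (Fin 2) (Fin 2) ℂ) (a : QState3) : QState3 :=
  fun i j k => ∑ i' : Fin 2, ∑ j' : Fin 2, ∑ k' : Fin 2,
    m₁ i i' * m₂ j j' * m₃ k k' * a i' j' k'

lemma sloccAct_eq_actAll (g₁ g₂ g₃ : Matrix.SpecialLinearGroup (Fin 2) ℂ) (a : QState3) :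
    sloccAct g₁ g₂ g₃ a = actAll g₁ g₂ g₃ a := rfl

lemma actAll_comp (m₁ m₂ m₃ n₁ n₂ n₃ : Matrix (Fin 2) (Fin 2) ℂ) (a : QState3) :
    actAll m₁ m₂ m₃ (actAll n₁ n₂ n₃ a) = actAll (m₁ * n₁) (m₂ * n₂) (m₃ * n₃) a := by
  funext i j k
  simp only [actAll, Fin.sum_univ_two, Matrix.mul_apply]
  ring

lemma actAll_decomp (m₁ m₂ m₃ : Matrix (Fin 2) (Fin 2) ℂ) (a : QState3) :
    actAll m₁ m₂ m₃ a = act1 m₁ (act2 m₂ (act3 m₃ a)) := by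
  funext i j k
  simp only [actAll, act1, act2, act3, Fin.sum_univ_two]
  ring

lemma actAll_decomp' (m₁ m₂ m₃ : Matrix (Fin 2) (Fin 2) ℂ) (a : QState3) :
    actAll m₁ m₂ m₃ a = act2 m₂ (act3 m₃ (act1 m₁ a)) := by
  funext i j k
  simp only [actAll, act1, act2, act3, Fin.sum_univ_two]
  ring

def alphaOf (a : QState3) : ℂ := a 0 0 0 * a 0 1 1 - a 0 0 1 * a 0 1 0
def gammaOf (a : QState3) : ℂ := a 1 0 0 * a 1 1 1 - a 1 0 1 * a 1 1 0
def betaOf (a : QState3) : ℂ :=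
  a 0 0 0 * a 1 1 1 + a 1 0 0 * a 0 1 1 - a 0 0 1 * a 1 1 0 - a 1 0 1 * a 0 1 0

lemma q_eq (a : QState3) :
    quarticQ3 a = -2 * (betaOf a ^ 2 - 4 * alphaOf a * gammaOf a) := by
  simp only [quarticQ3, alphaOf, betaOf, gammaOf]; ring

lemma alpha_act1 (m : Matrix (Fin 2) (Fin 2) ℂ) (a : QState3) :
    alphaOf (act1 m a) =
      alphaOf a * m 0 0 ^ 2 + betaOf a * (m 0 0 * m 0 1) + gammaOf a * m 0 1 ^ 2 := by
  simp only [alphaOf, betaOf, gammaOf, act1]; ring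

lemma gamma_act1 (m : Matrix (Fin 2) (Fin 2) ℂ) (a : QState3) :
    gammaOf (act1 m a) =
      alphaOf a * m 1 0 ^ 2 + betaOf a * (m 1 0 * m 1 1) + gammaOf a * m 1 1 ^ 2 := by
  simp only [alphaOf, betaOf, gammaOf, act1]; ring

lemma q_act1 (m : Matrix (Fin 2) (Fin 2) ℂ) (a : QState3) :
    quarticQ3 (act1 m a) = (m 0 0 * m 1 1 - m 0 1 * m 1 0) ^ 2 * quarticQ3 a := by
  simp only [quarticQ3, act1]; ring

lemma q_act2 (m : Matrix (Fin 2) (Fin 2) ℂ) (a : QState3) :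
    quarticQ3 (act2 m a) = (m 0 0 * m 1 1 - m 0 1 * m 1 0) ^ 2 * quarticQ3 a := by
  simp only [quarticQ3, act2]; ring

lemma q_act3 (m : Matrix (Fin 2) (Fin 2) ℂ) (a : QState3) :
    quarticQ3 (act3 m a) = (m 0 0 * m 1 1 - m 0 1 * m 1 0) ^ 2 * quarticQ3 a := by
  simp only [quarticQ3, act3]; ring

lemma rank1 (M : Fin 2 → Fin 2 → ℂ) (h : M 0 0 * M 1 1 - M 0 1 * M 1 0 = 0) :
    ∃ u v : Fin 2 → ℂ, ∀ j k, M j k = u j * v k := by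
  by_cases h0 : M 0 0 = 0
  · by_cases h1 : M 1 0 = 0
    · refine ⟨![M 0 1, M 1 1], ![0, 1], ?_⟩
      intro j k
      fin_cases j <;> fin_cases k <;> simp [h0, h1]
    · have h01 : M 0 1 = 0 := by
        have h2 : M 0 1 * M 1 0 = 0 := by linear_combination -h + h0 * M 1 1
        rcases mul_eq_zero.1 h2 with h' | h'
        · exact h'
        · exact absurd h' h1
      refine ⟨![0, 1], ![M 1 0, M 1 1], ?_⟩
      intro j k
      fin_cases j <;> fin_cases k <;> simp [h0, h01]
  · refine ⟨![M 0 0, M 1 0], ![1, M 0 1 / M 0 0], ?_⟩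
    have h11 : M 1 1 = M 1 0 * (M 0 1 / M 0 0) := by
      field_simp
      linear_combination h
    intro j k
    fin_cases j <;> fin_cases k <;> simp [h0, h11]
    field_simp

set_option maxHeartbeats 3200000 in
/-- A rank-4 state (nonvanishing quartic norm) is SLOCC-equivalent to the GHZ-class
representative `|111⟩ + |001⟩ + |010⟩ + k|100⟩` with `k = −q(a)/8`. -/
theorem rank4_GHZ_class :
    ∀ a : QState3, quarticQ3 a ≠ 0 →
      ∃ g₁ g₂ g₃ : Matrix.SpecialLinearGroup (Fin 2) ℂ,
        sloccAct g₁ g₂ g₃ a = fun i j k =>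
          if (i, j, k) = (1, 1, 1) ∨ (i, j, k) = (0, 0, 1) ∨ (i, j, k) = (0, 1, 0) then 1
          else if (i, j, k) = (1, 0, 0) then -quarticQ3 a / 8
          else 0 := by
  intro a hq
  have hD : betaOf a ^ 2 - 4 * alphaOf a * gammaOf a ≠ 0 := by
    intro h
    apply hq
    rw [q_eq, h]
    ring
  obtain ⟨m₁, hdet₁, hα, hγ⟩ :
      ∃ m₁ : Matrix (Fin 2) (Fin 2) ℂ,
        m₁ 0 0 * m₁ 1 1 - m₁ 0 1 * m₁ 1 0 = 1 ∧
        alphaOf (act1 m₁ a) = 0 ∧ gammaOf (act1 m₁ a) = 0 := by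
    by_cases hA : alphaOf a = 0
    · have hB : betaOf a ≠ 0 := fun h => hD (by rw [h, hA]; ring)
      refine ⟨!![1, 0; -(gammaOf a / betaOf a), 1], by simp, ?_, ?_⟩
      · rw [alpha_act1]
        simp [hA]
      · rw [gamma_act1]
        rw [hA]
        simp only [Fin.isValue, Matrix.of_apply, Matrix.cons_val', Matrix.cons_val_zero, Matrix.cons_val_one,
          Matrix.head_cons, Matrix.empty_val', Matrix.cons_val_fin_one, Matrix.head_fin_const]
        field_simp
        ring
    · obtain ⟨s, hs⟩ : ∃ s : ℂ, s ^ 2 = betaOf a ^ 2 - 4 * alphaOf a * gammaOf a :=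
        IsAlgClosed.exists_pow_nat_eq _ (n := 2) (by norm_num)
      have hs0 : s ≠ 0 := by
        intro h
        apply hD
        rw [← hs, h]
        ring
      refine ⟨!![(-betaOf a + s) / (2 * alphaOf a), 1;
          (-betaOf a - s) / (2 * s), alphaOf a / s], ?_, ?_, ?_⟩
      · simp only [Fin.isValue, Matrix.of_apply, Matrix.cons_val', Matrix.cons_val_zero, Matrix.cons_val_one,
          Matrix.head_cons, Matrix.empty_val', Matrix.cons_val_fin_one, Matrix.head_fin_const]
        field_simp
        ring
      · rw [alpha_act1]
        simp only [Fin.isValue, Matrix.of_apply, Matrix.cons_val', Matrix.cons_val_zero, Matrix.cons_val_one,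
          Matrix.head_cons, Matrix.empty_val', Matrix.cons_val_fin_one, Matrix.head_fin_const]
        field_simp
        linear_combination hs
      · rw [gamma_act1]
        simp only [Fin.isValue, Matrix.of_apply, Matrix.cons_val', Matrix.cons_val_zero, Matrix.cons_val_one,
          Matrix.head_cons, Matrix.empty_val', Matrix.cons_val_fin_one, Matrix.head_fin_const]
        field_simp
        linear_combination (alphaOf a) * hs
  obtain ⟨a1, ha1⟩ : ∃ x : QState3, x = act1 m₁ a := ⟨_, rfl⟩
  rw [← ha1] at hα hγ
  have hq1 : quarticQ3 a1 = quarticQ3 a := by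
    rw [ha1, q_act1, hdet₁, one_pow, one_mul]
  have hb2 : -2 * betaOf a1 ^ 2 = quarticQ3 a := by
    rw [← hq1, q_eq, hα, hγ]
    ring
  obtain ⟨u, v, huv⟩ := rank1 (fun j k => a1 0 j k) hα
  obtain ⟨u', v', huv'⟩ := rank1 (fun j k => a1 1 j k) hγ
  replace huv : ∀ j k, a1 0 j k = u j * v k := huv
  replace huv' : ∀ j k, a1 1 j k = u' j * v' k := huv'
  have hβdd : betaOf a1 = (u 0 * u' 1 - u 1 * u' 0) * (v 0 * v' 1 - v 1 * v' 0) := by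
    simp only [betaOf, huv, huv']
    ring
  have hβ : betaOf a1 ≠ 0 := fun h => hq (by rw [← hb2, h]; ring)
  have hdu : u 0 * u' 1 - u 1 * u' 0 ≠ 0 := fun h => hβ (by rw [hβdd, h, zero_mul])
  have hdv : v 0 * v' 1 - v 1 * v' 0 ≠ 0 := fun h => hβ (by rw [hβdd, h, mul_zero])
  obtain ⟨t, ht_def⟩ : ∃ x : ℂ, x = (u 0 * u' 1 - u 1 * u' 0) * (v 0 * v' 1 - v 1 * v' 0) :=
    ⟨_, rfl⟩
  have ht : t ≠ 0 := by rw [ht_def]; exact mul_ne_zero hdu hdv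
  have ht2 : -2 * t ^ 2 = quarticQ3 a := by rw [ht_def, ← hβdd]; exact hb2
  obtain ⟨m₂, hm₂⟩ : ∃ x : Matrix (Fin 2) (Fin 2) ℂ,
      x = !![u' 1 / (u 0 * u' 1 - u 1 * u' 0), -(u' 0 / (u 0 * u' 1 - u 1 * u' 0)); -(u 1), u 0] :=
    ⟨_, rfl⟩
  obtain ⟨m₃, hm₃⟩ : ∃ x : Matrix (Fin 2) (Fin 2) ℂ,
      x = !![v' 1 / (v 0 * v' 1 - v 1 * v' 0), -(v' 0 / (v 0 * v' 1 - v 1 * v' 0)); -(v 1), v 0] :=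
    ⟨_, rfl⟩
  have hc : act2 m₂ (act3 m₃ a1) = (fun i j k =>
      if i = 0 ∧ j = 0 ∧ k = 0 then 1 else if i = 1 ∧ j = 1 ∧ k = 1 then t else 0) := by
    funext i j k
    fin_cases i <;> fin_cases j <;> fin_cases k <;>
      simp [act2, act3, hm₂, hm₃, huv, huv', ht_def]
    all_goals (have hdu2 : u' 1 * u 0 - u 1 * u' 0 ≠ 0 := by contrapose! hdu; linear_combination hdu)
    all_goals (have hdv2 : v' 1 * v 0 - v 1 * v' 0 ≠ 0 := by contrapose! hdv; linear_combination hdv)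
    all_goals (try field_simp)
    all_goals ring
  have hdetG₁ : (!![1 / t, -1; 1 / 2, t / 2] : Matrix (Fin 2) (Fin 2) ℂ).det = 1 := by
    rw [Matrix.det_fin_two_of]
    field_simp
    all_goals ring
  have hdetG₂ : (!![t / 2, -(1 / 2); 1, 1 / t] : Matrix (Fin 2) (Fin 2) ℂ).det = 1 := by
    rw [Matrix.det_fin_two_of]
    field_simp
    all_goals ring
  have hdetm₂ : m₂.det = 1 := by
    rw [hm₂, Matrix.det_fin_two_of]
    field_simp [hdu]
    all_goals exact div_self (by contrapose! hdu; linear_combination hdu)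
  have hdetm₃ : m₃.det = 1 := by
    rw [hm₃, Matrix.det_fin_two_of]
    field_simp [hdv]
    all_goals exact div_self (by contrapose! hdv; linear_combination hdv)
  refine ⟨⟨!![1 / t, -1; 1 / 2, t / 2], hdetG₁⟩ * ⟨m₁, by rw [Matrix.det_fin_two]; exact hdet₁⟩,
    ⟨!![t / 2, -(1 / 2); 1, 1 / t], hdetG₂⟩ * ⟨m₂, hdetm₂⟩,
    ⟨!![t / 2, -(1 / 2); 1, 1 / t], hdetG₂⟩ * ⟨m₃, hdetm₃⟩, ?_⟩
  rw [sloccAct_eq_actAll]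
  change actAll (!![1 / t, -1; 1 / 2, t / 2] * m₁) (!![t / 2, -(1 / 2); 1, 1 / t] * m₂) (!![t / 2, -(1 / 2); 1, 1 / t] * m₃) a = _
  rw [← actAll_comp, actAll_decomp, actAll_decomp', ← ha1, hc]
  funext i j k
  fin_cases i <;> fin_cases j <;> fin_cases k <;>
    simp [act1, act2, act3, Prod.ext_iff]
  all_goals try field_simp
  all_goals try ring
  all_goals linear_combination -8 * ht2
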